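/- arXiv:2008.01916 — 4 statements merged into one kernel-verified Lean document; each statement's English description precedes it below -/
import Mathlib

section
/- Let ι be a finite nonempty index set and 𝒳 a type of records, and model datasets as functions D : ι → 𝒳. Let f : (ι → 𝒳) → ℝ be a query, let ε > 0 and Δ > 0, and assume that |f(D) − f(D′)| ≤ Δ for all neighbouring datasets D, D′. For each dataset D, let μ_D be the probability measure on ℝ with density x ↦ (ε/(2Δ))·exp(−ε·|x − f(D)|/Δ) with respect to Lebesgue measure (the Laplace mechanism with noise Lap(Δ/ε) added to f(D)). Then the Laplace mechanism satisfies ε-differential privacy: for all neighbouring datasets D, D′ and every measurable set S ⊆ ℝ, μ_D(S) ≤ exp(ε)·μ_{D′}(S). -/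
/-! Shifting the centre of a Laplace density by at most `Δ` changes `-ε|x - m|/Δ` by at most
`ε`, by the triangle inequality, so the two densities are within a factor `exp ε` of each other
pointwise; integrating this bound over `S` gives the privacy inequality. -/

open MeasureTheory

/-- Two datasets are neighbouring if they differ at exactly one index. -/
def Neighbouring {ι 𝒳 : Type*} (D D' : ι → 𝒳) : Prop :=
  ∃ i, D i ≠ D' i ∧ ∀ j, j ≠ i → D j = D' j

/-- The Laplace mechanism `f(D) + Lap(Δ/ε)`, as the measure on `ℝ` with density
`x ↦ (ε/(2Δ)) · exp (-ε·|x - f D|/Δ)` with respect to Lebesgue measure. -/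
noncomputable def laplaceMechanism {ι 𝒳 : Type*} (f : (ι → 𝒳) → ℝ) (ε Δ : ℝ)
    (D : ι → 𝒳) : Measure ℝ :=
  volume.withDensity fun x =>
    ENNReal.ofReal ((ε / (2 * Δ)) * Real.exp (-(ε * |x - f D|) / Δ))

open scoped ENNReal

theorem MeasureTheory.withDensity_le_smul_withDensity {α : Type*} [MeasurableSpace α]
    {μ : Measure α} {f g : α → ℝ≥0∞} {c : ℝ≥0∞} (hc : c ≠ ∞) (hfg : f ≤ᵐ[μ] c • g) :
    μ.withDensity f ≤ c • μ.withDensity g := by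
  rw [← withDensity_smul' c g hc]
  exact withDensity_mono hfg

theorem Real.exp_neg_mul_abs_sub_div_le {ε Δ m m' : ℝ} (hε : 0 ≤ ε) (hΔ : 0 < Δ)
    (hm : |m - m'| ≤ Δ) (x : ℝ) :
    Real.exp (-(ε * |x - m|) / Δ) ≤ Real.exp ε * Real.exp (-(ε * |x - m'|) / Δ) := by
  rw [← Real.exp_add, Real.exp_le_exp]
  have hshift : |x - m'| - |x - m| ≤ Δ :=
    calc |x - m'| - |x - m| ≤ |(x - m') - (x - m)| := abs_sub_abs_le_abs_sub _ _
      _ = |m - m'| := by rw [sub_sub_sub_cancel_left]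
      _ ≤ Δ := hm
  rw [← sub_le_iff_le_add, ← sub_div, div_le_iff₀ hΔ]
  linarith [mul_le_mul_of_nonneg_left hshift hε]

theorem laplaceMechanism_le_exp_smul {ι 𝒳 : Type*} {f : (ι → 𝒳) → ℝ} {ε Δ : ℝ}
    (hε : 0 ≤ ε) (hΔ : 0 < Δ) {D D' : ι → 𝒳} (hDD' : |f D - f D'| ≤ Δ) :
    laplaceMechanism f ε Δ D ≤ ENNReal.ofReal (Real.exp ε) • laplaceMechanism f ε Δ D' := by
  refine withDensity_le_smul_withDensity ENNReal.ofReal_ne_top (ae_of_all _ fun x => ?_)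
  have hnorm : 0 ≤ ε / (2 * Δ) := by positivity
  simp only [Pi.smul_apply, smul_eq_mul]
  rw [← ENNReal.ofReal_mul (Real.exp_nonneg ε)]
  refine ENNReal.ofReal_le_ofReal ?_
  rw [mul_left_comm]
  exact mul_le_mul_of_nonneg_left (Real.exp_neg_mul_abs_sub_div_le hε hΔ hDD' x) hnorm

theorem laplaceMechanism_dp_general {ι 𝒳 : Type*}
    (f : (ι → 𝒳) → ℝ) (ε Δ : ℝ) (hε : 0 < ε) (hΔ : 0 < Δ)
    (hsens : ∀ D D' : ι → 𝒳, Neighbouring D D' → |f D - f D'| ≤ Δ) :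
    ∀ D D' : ι → 𝒳, Neighbouring D D' → ∀ S : Set ℝ, MeasurableSet S →
      laplaceMechanism f ε Δ D S ≤
        ENNReal.ofReal (Real.exp ε) * laplaceMechanism f ε Δ D' S := by
  intro D D' hN S _
  exact laplaceMechanism_le_exp_smul hε.le hΔ (hsens D D' hN) S

/-- The Laplace mechanism satisfies `ε`-differential privacy: if the query `f` has
sensitivity at most `Δ` over neighbouring datasets, then for all neighbouring `D, D'`
and every measurable `S ⊆ ℝ`, `μ_D(S) ≤ exp ε · μ_{D'}(S)`. -/
theorem laplaceMechanism_dp {ι 𝒳 : Type*} [Fintype ι] [Nonempty ι]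
    (f : (ι → 𝒳) → ℝ) (ε Δ : ℝ) (hε : 0 < ε) (hΔ : 0 < Δ)
    (hsens : ∀ D D' : ι → 𝒳, Neighbouring D D' → |f D - f D'| ≤ Δ) :
    ∀ D D' : ι → 𝒳, Neighbouring D D' → ∀ S : Set ℝ, MeasurableSet S →
      laplaceMechanism f ε Δ D S ≤
        ENNReal.ofReal (Real.exp ε) * laplaceMechanism f ε Δ D' S :=
  laplaceMechanism_dp_general f ε Δ hε hΔ hsens
end

section
/- Let ι be a finite nonempty index set and 𝒳 a type of records, and model datasets as functions D : ι → 𝒳. Let f : (ι → 𝒳) → ℝ be a query, let 0 < ε < 1, 0 < δ < 1, Δ > 0, and assume |f(D) − f(D′)| ≤ Δ for all neighbouring datasets D, D′. Set σ = Δ·√(2·ln(1.25/δ))/ε, and for each dataset D let μ_D be the Gaussian measure on ℝ with mean f(D) and variance σ² (the Gaussian mechanism). Then the Gaussian mechanism satisfies (ε, δ)-differential privacy: for all neighbouring datasets D, D′ and every measurable set S ⊆ ℝ, μ_D(S) ≤ exp(ε)·μ_{D′}(S) + δ. -/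
/-! The privacy loss of an output `x`, `log (p_{f D} x / p_{f D'} x)`, is the affine function
`a (2x - f D - f D') / (2σ²)` with `a = f D - f D'`. Where it is at most `ε` the two densities
differ by a factor at most `exp ε`, so it suffices that the rest, a half-line beyond
`f D + σ²ε/|a| - |a|/2`, has mass at most `δ`. With the calibration `σ²ε² = 2Δ² log (1.25/δ)`
this follows from the tail bound `P(X > μ + t) ≤ exp (-t²/(2σ²)) / 2`, except when `δ > 0.97`:
then the half-line may start below the mean, and its mass is at most `1/2` plus the maximal
density times the length of the gap. -/

open MeasureTheory

/-- The Gaussian mechanism: the Gaussian measure on `ℝ` with mean `f D`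
and variance `σ²`. -/
noncomputable def gaussianMechanism {ι 𝒳 : Type*} (f : (ι → 𝒳) → ℝ) (σ : ℝ)
    (D : ι → 𝒳) : Measure ℝ :=
  ProbabilityTheory.gaussianReal (f D) (⟨σ ^ 2, sq_nonneg σ⟩ : NNReal)

open ProbabilityTheory Real Set
open scoped ENNReal NNReal

namespace ProbabilityTheory

noncomputable def gaussianPrivacyLoss (μ μ' : ℝ) (v : ℝ≥0) (x : ℝ) : ℝ :=
  ((x - μ') ^ 2 - (x - μ) ^ 2) / (2 * v)

variable {μ μ' : ℝ} {v : ℝ≥0}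

lemma gaussianPDFReal_eq_exp_gaussianPrivacyLoss_mul (μ μ' : ℝ) (v : ℝ≥0) (x : ℝ) :
    gaussianPDFReal μ v x = exp (gaussianPrivacyLoss μ μ' v x) * gaussianPDFReal μ' v x := by
  simp only [gaussianPDFReal_def, gaussianPrivacyLoss]
  rw [mul_left_comm, ← exp_add]
  congr 2
  ring

lemma gaussianReal_le_ofReal_exp_mul_of_gaussianPrivacyLoss_le (hv : v ≠ 0) {s : Set ℝ} {c : ℝ}
    (h : ∀ x ∈ s, gaussianPrivacyLoss μ μ' v x ≤ c) :
    gaussianReal μ v s ≤ ENNReal.ofReal (exp c) * gaussianReal μ' v s := by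
  rw [gaussianReal_apply _ hv, gaussianReal_apply _ hv,
    ← lintegral_const_mul _ (measurable_gaussianPDF _ _)]
  refine setLIntegral_mono ((measurable_gaussianPDF _ _).const_mul _) fun x hx => ?_
  rw [gaussianPDF, gaussianPDF, ← ENNReal.ofReal_mul (exp_pos c).le,
    gaussianPDFReal_eq_exp_gaussianPrivacyLoss_mul μ μ']
  gcongr
  · exact gaussianPDFReal_nonneg _ _ _
  · exact h x hx

lemma gaussianReal_Iio_sub_eq_Ioi_add (μ : ℝ) (v : ℝ≥0) (t : ℝ) :
    gaussianReal μ v (Iio (μ - t)) = gaussianReal μ v (Ioi (μ + t)) := by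
  have hreflect : (gaussianReal μ v).map (2 * μ - ·) = gaussianReal μ v := by
    rw [gaussianReal_map_const_sub, two_mul, add_sub_cancel_right]
  conv_lhs => rw [← hreflect]
  rw [Measure.map_apply (by fun_prop) measurableSet_Iio]
  congr 1
  ext x
  simp only [mem_Iio, mem_preimage, mem_Ioi]
  constructor <;> intro h <;> linarith

lemma gaussianReal_Ioi_self (μ : ℝ) (hv : v ≠ 0) : gaussianReal μ v (Ioi μ) = 2⁻¹ := by
  have := nullSingletonClass_gaussianReal (μ := μ) hv
  have hcompl := prob_add_prob_compl (μ := gaussianReal μ v) (measurableSet_Ioi (a := μ))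
  have hsymm := gaussianReal_Iio_sub_eq_Ioi_add μ v 0
  rw [sub_zero, add_zero] at hsymm
  rw [compl_Ioi, ← measure_congr Iio_ae_eq_Iic, hsymm, ← two_mul] at hcompl
  exact ENNReal.eq_inv_of_mul_eq_one_left (by rwa [mul_comm])

lemma gaussianReal_Ioi_add_le (hv : v ≠ 0) {t : ℝ} (ht : 0 ≤ t) :
    gaussianReal μ v (Ioi (μ + t)) ≤ ENNReal.ofReal (exp (-t ^ 2 / (2 * v))) * 2⁻¹ := by
  rw [← gaussianReal_Ioi_self (μ + t) hv]
  refine gaussianReal_le_ofReal_exp_mul_of_gaussianPrivacyLoss_le hv fun x hx => ?_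
  have hx : μ + t < x := hx
  rw [gaussianPrivacyLoss]
  gcongr
  nlinarith

lemma gaussianPDFReal_le_inv_sqrt (μ : ℝ) (v : ℝ≥0) (x : ℝ) :
    gaussianPDFReal μ v x ≤ (√(2 * π * v))⁻¹ := by
  rw [gaussianPDFReal_def]
  refine mul_le_of_le_one_right (by positivity) (exp_le_one_iff.mpr ?_)
  exact div_nonpos_of_nonpos_of_nonneg (neg_nonpos.mpr (sq_nonneg _)) (by positivity)

lemma gaussianReal_le_ofReal_mul_volume (hv : v ≠ 0) (s : Set ℝ) :
    gaussianReal μ v s ≤ ENNReal.ofReal (√(2 * π * v))⁻¹ * volume s := by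
  rw [gaussianReal_apply _ hv, ← setLIntegral_const]
  exact setLIntegral_mono measurable_const fun x _ =>
    ENNReal.ofReal_le_ofReal (gaussianPDFReal_le_inv_sqrt μ v x)

lemma gaussianReal_Ioi_add_le_ofReal_add_inv_two (hv : v ≠ 0) (t : ℝ) :
    gaussianReal μ v (Ioi (μ + t)) ≤ ENNReal.ofReal (-t * (√(2 * π * v))⁻¹) + 2⁻¹ := by
  have hcover : Ioi (μ + t) ⊆ Ioc (μ + t) μ ∪ Ioi μ := fun x hx => by
    rcases le_or_gt x μ with h | h
    · exact Or.inl ⟨hx, h⟩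
    · exact Or.inr h
  calc gaussianReal μ v (Ioi (μ + t))
      ≤ gaussianReal μ v (Ioc (μ + t) μ) + gaussianReal μ v (Ioi μ) :=
        (measure_mono hcover).trans (measure_union_le _ _)
    _ ≤ ENNReal.ofReal (√(2 * π * v))⁻¹ * volume (Ioc (μ + t) μ) + 2⁻¹ := by
        rw [gaussianReal_Ioi_self μ hv]
        gcongr
        exact gaussianReal_le_ofReal_mul_volume hv _
    _ = ENNReal.ofReal (-t * (√(2 * π * v))⁻¹) + 2⁻¹ := by
        rw [Real.volume_Ioc, ← ENNReal.ofReal_mul (by positivity), mul_comm]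
        congr 3
        ring

lemma gaussianReal_setOf_lt_gaussianPrivacyLoss_le (hv : v ≠ 0) (hμ : μ ≠ μ') (ε : ℝ) :
    gaussianReal μ v {x | ε < gaussianPrivacyLoss μ μ' v x}
      ≤ gaussianReal μ v (Ioi (μ + (v * ε / |μ - μ'| - |μ - μ'| / 2))) := by
  have hv₀ : (0 : ℝ) < 2 * v := by positivity
  have hloss : ∀ x, ε < gaussianPrivacyLoss μ μ' v x →
      2 * v * ε < (μ - μ') * (2 * (x - μ) + (μ - μ')) := fun x hx => by
    rw [gaussianPrivacyLoss, lt_div_iff₀ hv₀] at hx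
    linarith
  rcases lt_or_gt_of_ne (sub_ne_zero.mpr hμ) with hneg | hpos
  · rw [abs_of_neg hneg, ← gaussianReal_Iio_sub_eq_Ioi_add]
    refine measure_mono fun x hx => ?_
    have hthreshold : v * ε / -(μ - μ') < μ - x - (μ - μ') / 2 := by
      rw [div_lt_iff₀ (neg_pos.mpr hneg)]
      linarith [hloss x hx]
    rw [mem_Iio]
    linarith
  · rw [abs_of_pos hpos]
    refine measure_mono fun x hx => ?_
    have hthreshold : v * ε / (μ - μ') < x - μ + (μ - μ') / 2 := by
      rw [div_lt_iff₀ hpos]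
      linarith [hloss x hx]
    rw [mem_Ioi]
    linarith

end ProbabilityTheory

lemma one_fifth_le_log_div {δ : ℝ} (hδ : 0 < δ) (hδ1 : δ ≤ 1) : 1 / 5 ≤ log (1.25 / δ) := by
  have h := one_sub_inv_le_log_of_pos (show 0 < 1.25 / δ by positivity)
  rw [inv_div] at h
  linarith [div_le_div_of_nonneg_right hδ1 (show (0 : ℝ) ≤ 1.25 by norm_num)]

section Calibration

variable {ε Δ σ L a : ℝ}

lemma mul_two_mul_sub_le_sq_of_calibrated (hε : 0 ≤ ε) (ha : 0 < a) (haΔ : a ≤ Δ)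
    (hσ : σ ^ 2 * ε ^ 2 = 2 * Δ ^ 2 * L) :
    σ ^ 2 * (2 * L - ε) ≤ (σ ^ 2 * ε / a - a / 2) ^ 2 := by
  have hΔ : 0 < Δ := ha.trans_le haΔ
  have hfrac : σ ^ 2 * ε / Δ ≤ σ ^ 2 * ε / a := div_le_div_of_nonneg_left (by positivity) ha haΔ
  have hfracΔ : (σ ^ 2 * ε / Δ) ^ 2 = σ ^ 2 * (2 * L) := by
    field_simp
    linear_combination σ ^ 2 * hσ
  have hexpand : (σ ^ 2 * ε / a - a / 2) ^ 2 = (σ ^ 2 * ε / a) ^ 2 - σ ^ 2 * ε + a ^ 2 / 4 := by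
    field_simp
    ring
  nlinarith [pow_le_pow_left₀ (by positivity) hfrac 2]

lemma exp_neg_sq_div_le_of_calibrated (hε : 0 < ε) (hε1 : ε ≤ 1) (hσ₀ : 0 < σ) (ha : 0 < a)
    (haΔ : a ≤ Δ) (hσ : σ ^ 2 * ε ^ 2 = 2 * Δ ^ 2 * L) :
    exp (-(σ ^ 2 * ε / a - a / 2) ^ 2 / (2 * σ ^ 2)) / 2 ≤ 5 / 4 * exp (-L) := by
  have hexponent : -(σ ^ 2 * ε / a - a / 2) ^ 2 / (2 * σ ^ 2) ≤ 1 / 2 + -L := by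
    rw [div_le_iff₀ (by positivity)]
    nlinarith [mul_two_mul_sub_le_sq_of_calibrated hε.le ha haΔ hσ]
  have hexp_half : exp (1 / 2) ≤ 2 := by
    have hsq : exp (1 / 2) * exp (1 / 2) = exp 1 := by rw [← exp_add]; norm_num
    nlinarith [exp_pos (1 / 2), exp_one_lt_d9]
  calc exp (-(σ ^ 2 * ε / a - a / 2) ^ 2 / (2 * σ ^ 2)) / 2
      ≤ exp (1 / 2) * exp (-L) / 2 := by rw [← exp_add]; gcongr
    _ ≤ 5 / 4 * exp (-L) := by nlinarith [exp_pos (-L)]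

lemma neg_mul_inv_sqrt_add_half_le_of_calibrated (hε : 0 < ε) (hε1 : ε ≤ 1) (hσ₀ : 0 < σ)
    (ha : 0 < a) (haΔ : a ≤ Δ) (hσ : σ ^ 2 * ε ^ 2 = 2 * Δ ^ 2 * L) (hL : 1 / 5 ≤ L)
    (ht : σ ^ 2 * ε / a - a / 2 < 0) :
    -(σ ^ 2 * ε / a - a / 2) * (√(2 * π * σ ^ 2))⁻¹ + 2⁻¹ ≤ 5 / 4 * exp (-L) := by
  have hΔ : 0 < Δ := ha.trans_le haΔ
  have hsmall : σ ^ 2 * ε < Δ ^ 2 / 2 := by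
    have := (div_lt_iff₀ ha).mp (show σ ^ 2 * ε / a < a / 2 by linarith)
    nlinarith
  have hL_lt : L < ε / 4 := by nlinarith
  have hexp : 1 - L ≤ exp (-L) := by linarith [add_one_le_exp (-L)]
  have hsqrt : 5 / 4 * Δ ≤ √(2 * π * σ ^ 2) := by
    rw [le_sqrt (by positivity) (by positivity)]
    nlinarith [pi_gt_three]
  have hdist : -(σ ^ 2 * ε / a - a / 2) ≤ Δ / 2 := by
    have : 0 ≤ σ ^ 2 * ε / a := by positivity
    linarith
  have hband : -(σ ^ 2 * ε / a - a / 2) * (√(2 * π * σ ^ 2))⁻¹ ≤ 2 / 5 := by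
    rw [← div_eq_mul_inv, div_le_iff₀ (by positivity)]
    linarith
  linarith

end Calibration

lemma gaussianReal_Ioi_add_le_ofReal_of_calibrated {ε δ Δ σ a : ℝ} (μ : ℝ) (hε : 0 < ε)
    (hε1 : ε < 1) (hδ : 0 < δ) (hδ1 : δ < 1) (hσ₀ : 0 < σ)
    (hσ : σ = Δ * √(2 * log (1.25 / δ)) / ε) (ha : 0 < a) (haΔ : a ≤ Δ) :
    gaussianReal μ ⟨σ ^ 2, sq_nonneg σ⟩ (Ioi (μ + (σ ^ 2 * ε / a - a / 2)))
      ≤ ENNReal.ofReal δ := by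
  set L := log (1.25 / δ)
  have hL : 1 / 5 ≤ L := one_fifth_le_log_div hδ hδ1.le
  have hδL : δ = 5 / 4 * exp (-L) := by
    rw [exp_neg, exp_log (by positivity), inv_div]
    ring
  have hσL : σ ^ 2 * ε ^ 2 = 2 * Δ ^ 2 * L := by
    rw [hσ, div_pow, mul_pow, sq_sqrt (by linarith)]
    field_simp
  have hv : (⟨σ ^ 2, sq_nonneg σ⟩ : ℝ≥0) ≠ 0 := NNReal.coe_ne_zero.mp (pow_pos hσ₀ 2).ne'
  have hhalf : (2⁻¹ : ℝ≥0∞) = ENNReal.ofReal 2⁻¹ := by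
    rw [ENNReal.ofReal_inv_of_pos two_pos, ENNReal.ofReal_ofNat]
  rcases le_or_gt 0 (σ ^ 2 * ε / a - a / 2) with ht | ht
  · refine (gaussianReal_Ioi_add_le hv ht).trans ?_
    rw [hhalf, ← ENNReal.ofReal_mul (exp_pos _).le, hδL, ← div_eq_mul_inv]
    exact ENNReal.ofReal_le_ofReal (exp_neg_sq_div_le_of_calibrated hε hε1.le hσ₀ ha haΔ hσL)
  · refine (gaussianReal_Ioi_add_le_ofReal_add_inv_two hv _).trans ?_
    rw [hhalf, ← ENNReal.ofReal_add (mul_nonneg (by linarith) (by positivity)) (by norm_num), hδL]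
    exact ENNReal.ofReal_le_ofReal
      (neg_mul_inv_sqrt_add_half_le_of_calibrated hε hε1.le hσ₀ ha haΔ hσL hL ht)

theorem gaussianMechanism_dp_general {ι 𝒳 : Type*}
    (f : (ι → 𝒳) → ℝ) (ε δ Δ : ℝ)
    (hε : 0 < ε) (hε1 : ε < 1) (hδ : 0 < δ) (hδ1 : δ < 1) (hΔ : 0 < Δ)
    (hsens : ∀ D D' : ι → 𝒳, Neighbouring D D' → |f D - f D'| ≤ Δ)
    (σ : ℝ) (hσ : σ = Δ * Real.sqrt (2 * Real.log (1.25 / δ)) / ε) :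
    ∀ D D' : ι → 𝒳, Neighbouring D D' → ∀ S : Set ℝ, MeasurableSet S →
      gaussianMechanism f σ D S ≤
        ENNReal.ofReal (Real.exp ε) * gaussianMechanism f σ D' S +
          ENNReal.ofReal δ := by
  intro D D' hD S _
  set v : ℝ≥0 := ⟨σ ^ 2, sq_nonneg σ⟩
  have hσ₀ : 0 < σ := by
    rw [hσ]
    have : 0 < √(2 * log (1.25 / δ)) :=
      sqrt_pos.mpr (mul_pos two_pos (log_pos ((one_lt_div hδ).mpr (by linarith))))
    positivity
  have hv : v ≠ 0 := NNReal.coe_ne_zero.mp (pow_pos hσ₀ 2).ne'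
  let bad := {x | ε < gaussianPrivacyLoss (f D) (f D') v x}
  have hgood : gaussianReal (f D) v (S \ bad) ≤ ENNReal.ofReal (exp ε) * gaussianReal (f D') v S :=
    (gaussianReal_le_ofReal_exp_mul_of_gaussianPrivacyLoss_le hv fun x hx => not_lt.mp hx.2).trans
      (by gcongr; exact sdiff_subset)
  have hbad : gaussianReal (f D) v bad ≤ ENNReal.ofReal δ := by
    rcases eq_or_ne (f D) (f D') with h | h
    · have hbad_empty : bad = ∅ := by simp [bad, h, gaussianPrivacyLoss, lt_asymm hε]
      simp [hbad_empty]
    · exact (gaussianReal_setOf_lt_gaussianPrivacyLoss_le hv h ε).trans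
        (gaussianReal_Ioi_add_le_ofReal_of_calibrated _ hε hε1 hδ hδ1 hσ₀ hσ
          (abs_pos.mpr (sub_ne_zero.mpr h)) (hsens D D' hD))
  calc gaussianMechanism f σ D S
      ≤ gaussianReal (f D) v (S \ bad) + gaussianReal (f D) v bad :=
        (measure_mono (subset_sdiff_union S bad)).trans (measure_union_le _ _)
    _ ≤ _ := add_le_add hgood hbad

/-- The Gaussian mechanism with `σ = Δ·√(2·ln(1.25/δ))/ε` satisfies
`(ε, δ)`-differential privacy: if `0 < ε < 1`, `0 < δ < 1` and the query `f` has
sensitivity at most `Δ` over neighbouring datasets, then for all neighbouring `D, D'`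
and every measurable `S ⊆ ℝ`, `μ_D(S) ≤ exp ε · μ_{D'}(S) + δ`. -/
theorem gaussianMechanism_dp {ι 𝒳 : Type*} [Fintype ι] [Nonempty ι]
    (f : (ι → 𝒳) → ℝ) (ε δ Δ : ℝ)
    (hε : 0 < ε) (hε1 : ε < 1) (hδ : 0 < δ) (hδ1 : δ < 1) (hΔ : 0 < Δ)
    (hsens : ∀ D D' : ι → 𝒳, Neighbouring D D' → |f D - f D'| ≤ Δ)
    (σ : ℝ) (hσ : σ = Δ * Real.sqrt (2 * Real.log (1.25 / δ)) / ε) :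
    ∀ D D' : ι → 𝒳, Neighbouring D D' → ∀ S : Set ℝ, MeasurableSet S →
      gaussianMechanism f σ D S ≤
        ENNReal.ofReal (Real.exp ε) * gaussianMechanism f σ D' S +
          ENNReal.ofReal δ :=
  gaussianMechanism_dp_general f ε δ Δ hε hε1 hδ hδ1 hΔ hsens σ hσ
end

section
/- Sequential composition for two mechanisms: Let ι be a finite nonempty index set and 𝒳 a type of records, and model datasets as functions D : ι → 𝒳. Let Ω₁ and Ω₂ be measurable spaces, and let M₁ and M₂ assign to each dataset probability measures M₁(D) on Ω₁ and M₂(D) on Ω₂. Suppose M₁ satisfies ε₁-differential privacy and M₂ satisfies ε₂-differential privacy, with ε₁, ε₂ ≥ 0. Then the composed mechanism D ↦ M₁(D) ⊗ M₂(D) (the product measure on Ω₁ × Ω₂) satisfies (ε₁ + ε₂)-differential privacy: for all neighbouring datasets D, D′ and every measurable set S ⊆ Ω₁ × Ω₂, (M₁(D) ⊗ M₂(D))(S) ≤ exp(ε₁ + ε₂) · (M₁(D′) ⊗ M₂(D′))(S). -/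
/-!
Differential privacy of `M` with parameter `ε` is the inequality of measures
`M D ≤ exp ε • M D'` for neighbouring `D, D'`. The product of measures is monotone in both
factors and pulls out scalars from each, so the two bounds multiply: the factors `exp ε₁` and
`exp ε₂` combine to `exp (ε₁ + ε₂)`.
-/

open MeasureTheory

open scoped ENNReal

namespace MeasureTheory.Measure

theorem prod_le_smul_prod_of_le_smul {α β : Type*} [MeasurableSpace α] [MeasurableSpace β]
    {μ μ' : Measure α} {ν ν' : Measure β} [SFinite ν'] {a b : ℝ≥0∞}
    (hμ : μ ≤ a • μ') (hν : ν ≤ b • ν') : μ.prod ν ≤ (a * b) • μ'.prod ν' :=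
  calc μ.prod ν ≤ (a • μ').prod (b • ν') := prod_mono hμ hν
    _ = (a * b) • μ'.prod ν' := by rw [prod_smul_left, prod_smul_right, smul_smul]

end MeasureTheory.Measure

section DifferentialPrivacy

variable {ι 𝒳 Ω₁ Ω₂ : Type*} [MeasurableSpace Ω₁] [MeasurableSpace Ω₂]

def IsDifferentiallyPrivate (M : (ι → 𝒳) → Measure Ω₁) (ε : ℝ) : Prop :=
  ∀ D D', Neighbouring D D' → M D ≤ ENNReal.ofReal (Real.exp ε) • M D'

theorem isDifferentiallyPrivate_iff {M : (ι → 𝒳) → Measure Ω₁} {ε : ℝ} :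
    IsDifferentiallyPrivate M ε ↔ ∀ D D', Neighbouring D D' → ∀ S, MeasurableSet S →
      M D S ≤ ENNReal.ofReal (Real.exp ε) * M D' S := by
  simp only [IsDifferentiallyPrivate, Measure.le_iff, Measure.smul_apply, smul_eq_mul]

theorem IsDifferentiallyPrivate.prod {M₁ : (ι → 𝒳) → Measure Ω₁} {M₂ : (ι → 𝒳) → Measure Ω₂}
    [∀ D, SFinite (M₂ D)] {ε₁ ε₂ : ℝ} (h₁ : IsDifferentiallyPrivate M₁ ε₁)
    (h₂ : IsDifferentiallyPrivate M₂ ε₂) :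
    IsDifferentiallyPrivate (fun D ↦ (M₁ D).prod (M₂ D)) (ε₁ + ε₂) := by
  intro D D' hDD'
  rw [Real.exp_add, ENNReal.ofReal_mul (Real.exp_nonneg _)]
  exact Measure.prod_le_smul_prod_of_le_smul (h₁ D D' hDD') (h₂ D D' hDD')

end DifferentialPrivacy

theorem sequential_composition_two_general {ι 𝒳 Ω₁ Ω₂ : Type*}
    [MeasurableSpace Ω₁] [MeasurableSpace Ω₂]
    (M₁ : (ι → 𝒳) → Measure Ω₁) (M₂ : (ι → 𝒳) → Measure Ω₂)
    (hM₂prob : ∀ D, IsProbabilityMeasure (M₂ D))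
    (ε₁ ε₂ : ℝ)
    (hM₁ : ∀ D D' : ι → 𝒳, Neighbouring D D' → ∀ S : Set Ω₁, MeasurableSet S →
      M₁ D S ≤ ENNReal.ofReal (Real.exp ε₁) * M₁ D' S)
    (hM₂ : ∀ D D' : ι → 𝒳, Neighbouring D D' → ∀ S : Set Ω₂, MeasurableSet S →
      M₂ D S ≤ ENNReal.ofReal (Real.exp ε₂) * M₂ D' S) :
    ∀ D D' : ι → 𝒳, Neighbouring D D' → ∀ S : Set (Ω₁ × Ω₂), MeasurableSet S →
      (M₁ D).prod (M₂ D) S ≤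
        ENNReal.ofReal (Real.exp (ε₁ + ε₂)) * (M₁ D').prod (M₂ D') S := by
  have (D : ι → 𝒳) : SFinite (M₂ D) := by have := hM₂prob D; infer_instance
  exact isDifferentiallyPrivate_iff.1 <|
    (isDifferentiallyPrivate_iff.2 hM₁).prod (isDifferentiallyPrivate_iff.2 hM₂)

/-- Sequential composition for two mechanisms: if `M₁` is `ε₁`-differentially private
and `M₂` is `ε₂`-differentially private, then the composed mechanism
`D ↦ M₁(D) ⊗ M₂(D)` is `(ε₁ + ε₂)`-differentially private. -/
theorem sequential_composition_two {ι 𝒳 Ω₁ Ω₂ : Type*} [Fintype ι] [Nonempty ι]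
    [MeasurableSpace Ω₁] [MeasurableSpace Ω₂]
    (M₁ : (ι → 𝒳) → Measure Ω₁) (M₂ : (ι → 𝒳) → Measure Ω₂)
    (hM₁prob : ∀ D, IsProbabilityMeasure (M₁ D))
    (hM₂prob : ∀ D, IsProbabilityMeasure (M₂ D))
    (ε₁ ε₂ : ℝ) (hε₁ : 0 ≤ ε₁) (hε₂ : 0 ≤ ε₂)
    (hM₁ : ∀ D D' : ι → 𝒳, Neighbouring D D' → ∀ S : Set Ω₁, MeasurableSet S →
      M₁ D S ≤ ENNReal.ofReal (Real.exp ε₁) * M₁ D' S)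
    (hM₂ : ∀ D D' : ι → 𝒳, Neighbouring D D' → ∀ S : Set Ω₂, MeasurableSet S →
      M₂ D S ≤ ENNReal.ofReal (Real.exp ε₂) * M₂ D' S) :
    ∀ D D' : ι → 𝒳, Neighbouring D D' → ∀ S : Set (Ω₁ × Ω₂), MeasurableSet S →
      (M₁ D).prod (M₂ D) S ≤
        ENNReal.ofReal (Real.exp (ε₁ + ε₂)) * (M₁ D').prod (M₂ D') S :=
  sequential_composition_two_general M₁ M₂ hM₂prob ε₁ ε₂ hM₁ hM₂
end

section
/- Sequential composition (Theorem 2 of the paper): Let ι be a finite nonempty index set and 𝒳 a type of records, and model datasets as functions D : ι → 𝒳. Let m ≥ 1, let Ω₁, …, Ω_m be measurable spaces, and for each i ∈ {1, …, m} let M_i assign to each dataset a probability measure M_i(D) on Ω_i, and suppose each M_i satisfies ε-differential privacy for a fixed ε ≥ 0. Then the composed mechanism D ↦ ⊗_{i=1}^m M_i(D) (the finite product measure on Ω₁ × ⋯ × Ω_m) satisfies (m·ε)-differential privacy: for all neighbouring datasets D, D′ and every measurable set S of the product space, (⊗_i M_i(D))(S) ≤ exp(m·ε) · (⊗_i M_i(D′))(S).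 -/
/-!
The product measure is monotone in each factor and scales by `c ^ m` when every one of its `m`
factors is scaled by `c`. Writing each `ε`-DP bound as the measure inequality
`Mᵢ(D) ≤ exp ε • Mᵢ(D')` therefore gives `⊗ᵢ Mᵢ(D) ≤ exp (m ε) • ⊗ᵢ Mᵢ(D')`.
-/

open MeasureTheory

open scoped NNReal

namespace MeasureTheory.Measure

variable {ι : Type*} [Fintype ι] {α : ι → Type*} [∀ i, MeasurableSpace (α i)]

theorem pi_mono {μ ν : ∀ i, Measure (α i)} (h : ∀ i, μ i ≤ ν i) :
    Measure.pi μ ≤ Measure.pi ν := by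
  refine le_iff.2 fun s hs => ?_
  rw [Measure.pi_def, Measure.pi_def, toMeasure_apply _ _ hs, toMeasure_apply _ _ hs]
  refine OuterMeasure.le_pi.2 (fun t _ => ?_) s
  exact (OuterMeasure.pi_pi_le _ t).trans (Finset.prod_le_prod' fun i _ => h i _)

theorem pi_smul_const (μ : ∀ i, Measure (α i)) [∀ i, SigmaFinite (μ i)] (c : ℝ≥0) :
    Measure.pi (fun i => c • μ i) = c ^ Fintype.card ι • Measure.pi μ := by
  refine pi_eq fun s hs => ?_
  rw [smul_apply, pi_pi, ENNReal.smul_def, smul_eq_mul, ENNReal.coe_pow]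
  simp [Finset.prod_mul_distrib]

theorem pi_le_pow_smul_pi {μ ν : ∀ i, Measure (α i)} [∀ i, SigmaFinite (ν i)] {c : ℝ≥0}
    (h : ∀ i, μ i ≤ c • ν i) : Measure.pi μ ≤ c ^ Fintype.card ι • Measure.pi ν :=
  (pi_mono h).trans_eq (pi_smul_const ν c)

end MeasureTheory.Measure

theorem sequential_composition_general {ι 𝒳 : Type*}
    (m : ℕ) (Ω : Fin m → Type*) [∀ i, MeasurableSpace (Ω i)]
    (M : ∀ i : Fin m, (ι → 𝒳) → Measure (Ω i))
    (hMprob : ∀ i D, IsProbabilityMeasure (M i D))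
    (ε : ℝ)
    (hM : ∀ i : Fin m, ∀ D D' : ι → 𝒳, Neighbouring D D' →
      ∀ S : Set (Ω i), MeasurableSet S →
        M i D S ≤ ENNReal.ofReal (Real.exp ε) * M i D' S) :
    ∀ D D' : ι → 𝒳, Neighbouring D D' → ∀ S : Set (∀ i, Ω i), MeasurableSet S →
      Measure.pi (fun i => M i D) S ≤
        ENNReal.ofReal (Real.exp (m * ε)) * Measure.pi (fun i => M i D') S := by
  intro D D' hDD' S _
  have := fun i => hMprob i D'
  have hle : ∀ i, M i D ≤ (Real.exp ε).toNNReal • M i D' :=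
    fun i => Measure.le_iff.2 fun s hs => hM i D D' hDD' s hs
  have hpow : (((Real.exp ε).toNNReal ^ m : ℝ≥0) : ENNReal) =
      ENNReal.ofReal (Real.exp (m * ε)) := by
    rw [Real.exp_nat_mul, ENNReal.ofReal_pow (Real.exp_nonneg ε), ENNReal.coe_pow]
    rfl
  simpa [hpow] using Measure.pi_le_pow_smul_pi hle S

/-- Sequential composition: if each of `m` mechanisms `M i` is `ε`-differentially
private, then the composed mechanism `D ↦ ⊗ᵢ Mᵢ(D)` (product measure of the `m`
independent outputs) is `(m·ε)`-differentially private. -/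
theorem sequential_composition {ι 𝒳 : Type*} [Fintype ι] [Nonempty ι]
    (m : ℕ) (hm : 1 ≤ m) (Ω : Fin m → Type*) [∀ i, MeasurableSpace (Ω i)]
    (M : ∀ i : Fin m, (ι → 𝒳) → Measure (Ω i))
    (hMprob : ∀ i D, IsProbabilityMeasure (M i D))
    (ε : ℝ) (hε : 0 ≤ ε)
    (hM : ∀ i : Fin m, ∀ D D' : ι → 𝒳, Neighbouring D D' →
      ∀ S : Set (Ω i), MeasurableSet S →
        M i D S ≤ ENNReal.ofReal (Real.exp ε) * M i D' S) :
    ∀ D D' : ι → 𝒳, Neighbouring D D' → ∀ S : Set (∀ i, Ω i), MeasurableSet S →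
      Measure.pi (fun i => M i D) S ≤
        ENNReal.ofReal (Real.exp (m * ε)) * Measure.pi (fun i => M i D') S :=
  sequential_composition_general m Ω M hMprob ε hM
end
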